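/- Let F = G − H with G, H : ℝⁿ → ℝ convex and H differentiable, and {x^k} a DCA sequence. Every cluster point x* of {x^k} satisfies ∇H(x*) ∈ ∂G(x*), provided G is continuous and ∇H is continuous. -/

import Mathlib

/-!
Convexity of `H` makes its tangent plane at `xᵏ` a minorant, so each DCA step minimises a
majorant of `F = G - H` that is tight at `xᵏ`. This gives descent, `F (xᵏ⁺¹) ≤ F (xᵏ)`, and the
estimate `F (xᵏ⁺¹) + H (xᵏ) + ⟪∇H (xᵏ), z - xᵏ⟫ ≤ G z` for every `z`. The decreasing values
`F (xᵏ)` converge to `F x*`, and letting `k → ∞` along a subsequence with `xᵏ → x*` in the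
estimate yields `G x* + ⟪∇H x*, z - x*⟫ ≤ G z`.
-/

open Set Filter Topology
open scoped RealInnerProductSpace

theorem Antitone.tendsto_atTop_of_mapClusterPt {ι α : Type*} [Preorder ι] [Preorder α]
    [TopologicalSpace α] [InfConvergenceClass α] [ClosedIicTopology α] [ClosedIciTopology α]
    {u : ι → α} {a : α} (hu : Antitone u) (ha : MapClusterPt a atTop u) :
    Tendsto u atTop (𝓝 a) := by
  refine tendsto_atTop_isGLB hu ⟨?_, fun b hb => ?_⟩
  · rintro _ ⟨m, rfl⟩
    exact isClosed_Iic.mem_of_mapClusterPt ha ((eventually_ge_atTop m).mono fun k hk => hu hk)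
  · exact isClosed_Ici.mem_of_mapClusterPt ha (Eventually.of_forall fun k => hb ⟨k, rfl⟩)

theorem ConvexOn.add_fderiv_le {E : Type*} [NormedAddCommGroup E] [NormedSpace ℝ E]
    {s : Set E} {f : E → ℝ} {f' : E →L[ℝ] ℝ} {a b : E} (hf : ConvexOn ℝ s f) (ha : a ∈ s)
    (hb : b ∈ s) (hf' : HasFDerivAt f f' a) :
    f a + f' (b - a) ≤ f b := by
  set ℓ : ℝ →ᵃ[ℝ] E := AffineMap.lineMap a b
  have hline : ConvexOn ℝ (ℓ ⁻¹' s) (f ∘ ℓ) := hf.comp_affineMap ℓ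
  have hderiv : HasDerivAt (f ∘ ℓ) (f' (b - a)) 0 := by
    refine HasFDerivAt.comp_hasDerivAt (0 : ℝ) ?_ AffineMap.hasDerivAt_lineMap
    simpa [ℓ] using hf'
  have := hline.le_slope_of_hasDerivAt (by simpa [ℓ] using ha) (by simpa [ℓ] using hb)
    zero_lt_one hderiv
  simp only [slope_def_field, Function.comp_apply, ℓ, AffineMap.lineMap_apply_zero,
    AffineMap.lineMap_apply_one, sub_zero, div_one] at this
  linarith

theorem ConvexOn.add_inner_le_of_hasGradientAt {E : Type*} [NormedAddCommGroup E]
    [InnerProductSpace ℝ E] [CompleteSpace E] {s : Set E} {f : E → ℝ} {g a b : E}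
    (hf : ConvexOn ℝ s f) (ha : a ∈ s) (hb : b ∈ s) (hg : HasGradientAt f g a) :
    f a + ⟪g, b - a⟫ ≤ f b :=
  hf.add_fderiv_le ha hb hg.hasFDerivAt

section DCAStep

variable {E : Type*} [NormedAddCommGroup E] [InnerProductSpace ℝ E] [CompleteSpace E]
  {G H : E → ℝ} {a g y : E}

theorem dca_step_le (hH : ConvexOn ℝ univ H) (hg : HasGradientAt H g a)
    (hy : IsMinOn (fun z => G z - ⟪z, g⟫) univ y) (z : E) :
    G y - H y + H a + ⟪g, z - a⟫ ≤ G z := by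
  have hmin : G y - ⟪y, g⟫ ≤ G z - ⟪z, g⟫ := hy (mem_univ z)
  have htangent := hH.add_inner_le_of_hasGradientAt (mem_univ a) (mem_univ y) hg
  rw [inner_sub_right] at htangent ⊢
  rw [real_inner_comm g y, real_inner_comm g z] at hmin
  linarith

theorem dca_step_descent (hH : ConvexOn ℝ univ H) (hg : HasGradientAt H g a)
    (hy : IsMinOn (fun z => G z - ⟪z, g⟫) univ y) :
    G y - H y ≤ G a - H a := by
  have := dca_step_le hH hg hy a
  rw [sub_self, inner_zero_right] at this
  linarith

end DCAStep

theorem dca_cluster_point_critical_general {n : ℕ}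
    (G H : EuclideanSpace ℝ (Fin n) → ℝ)
    (H' : EuclideanSpace ℝ (Fin n) → EuclideanSpace ℝ (Fin n))
    (hH : ConvexOn ℝ univ H)
    (hGcont : Continuous G) (hH'cont : Continuous H')
    (hH' : ∀ x, HasGradientAt H (H' x) x)
    (x : ℕ → EuclideanSpace ℝ (Fin n))
    (hiter : ∀ k, IsMinOn (fun z => G z - ⟪z, H' (x k)⟫) univ (x (k + 1)))
    (xstar : EuclideanSpace ℝ (Fin n))
    (hcluster : MapClusterPt xstar atTop x) :
    ∀ z, G xstar + ⟪H' xstar, z - xstar⟫ ≤ G z := by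
  intro z
  have hHcont : Continuous H := continuous_iff_continuousAt.2 fun y => (hH' y).continuousAt
  have hFcont : Continuous fun y => G y - H y := hGcont.sub hHcont
  have hFanti : Antitone fun k => G (x k) - H (x k) :=
    antitone_nat_of_succ_le fun k => dca_step_descent hH (hH' (x k)) (hiter k)
  have hFlim : Tendsto (fun k => G (x k) - H (x k)) atTop (𝓝 (G xstar - H xstar)) :=
    hFanti.tendsto_atTop_of_mapClusterPt (hcluster.continuousAt_comp hFcont.continuousAt)
  obtain ⟨ψ, hψ, hψx⟩ := hcluster.tendsto_subseq
  have hlim : Tendsto (fun j => G (x (ψ j + 1)) - H (x (ψ j + 1)) + H (x (ψ j))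
      + ⟪H' (x (ψ j)), z - x (ψ j)⟫) atTop
      (𝓝 (G xstar - H xstar + H xstar + ⟪H' xstar, z - xstar⟫)) :=
    ((hFlim.comp ((tendsto_add_atTop_nat 1).comp hψ.tendsto_atTop)).add
      ((hHcont.tendsto xstar).comp hψx)).add
      (((hH'cont.tendsto xstar).comp hψx).inner (tendsto_const_nhds.sub hψx))
  have := le_of_tendsto' hlim fun j => dca_step_le hH (hH' (x (ψ j))) (hiter (ψ j)) z
  linarith

theorem dca_cluster_point_critical {n : ℕ}
    (G H : EuclideanSpace ℝ (Fin n) → ℝ)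
    (H' : EuclideanSpace ℝ (Fin n) → EuclideanSpace ℝ (Fin n))
    (hG : ConvexOn ℝ univ G) (hH : ConvexOn ℝ univ H)
    (hGcont : Continuous G) (hH'cont : Continuous H')
    (hH' : ∀ x, HasGradientAt H (H' x) x)
    (x : ℕ → EuclideanSpace ℝ (Fin n))
    (hiter : ∀ k, IsMinOn (fun z => G z - ⟪z, H' (x k)⟫) univ (x (k + 1)))
    (xstar : EuclideanSpace ℝ (Fin n))
    (hcluster : MapClusterPt xstar atTop x) :
    ∀ z, G xstar + ⟪H' xstar, z - xstar⟫ ≤ G z :=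
  dca_cluster_point_critical_general G H H' hH hGcont hH'cont hH' x hiter xstar hcluster
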